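/- arXiv:2103.15702 — 5 statements merged into one kernel-verified Lean document; each statement's English description precedes it below -/
import Mathlib

section
/- Every real number x with |x| ≤ 1 has a signed digit representation, i.e., there exists a sequence d : ℕ → ℤ with d i ∈ {-1, 0, 1} for all i and x = ∑_{i=0}^∞ (d i) / 2^(i+1). -/
/-- A real number has a signed digit representation if it is the sum of a
series of digits in {-1, 0, 1} weighted by powers of 1/2. -/
def HasSDR (x : ℝ) : Prop :=
  ∃ d : ℕ → ℤ, (∀ i, d i = -1 ∨ d i = 0 ∨ d i = 1) ∧
    x = ∑' i : ℕ, (d i : ℝ) / 2 ^ (i + 1)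

noncomputable def sdrDigit (r : ℝ) : ℤ :=
  if 1/2 ≤ r then 1 else if r ≤ -(1/2) then -1 else 0

noncomputable def sdrRem (x : ℝ) : ℕ → ℝ
  | 0 => x
  | n+1 => 2 * sdrRem x n - (sdrDigit (sdrRem x n) : ℝ)

lemma sdrDigit_mem (r : ℝ) : sdrDigit r = -1 ∨ sdrDigit r = 0 ∨ sdrDigit r = 1 := by
  unfold sdrDigit; split_ifs <;> simp

lemma sdrRem_abs_le (x : ℝ) (hx : |x| ≤ 1) : ∀ n, |sdrRem x n| ≤ 1 := by
  intro n
  induction n with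
  | zero => exact hx
  | succ n ih =>
    show |2 * sdrRem x n - (sdrDigit (sdrRem x n) : ℝ)| ≤ 1
    rw [abs_le] at ih ⊢
    unfold sdrDigit
    split_ifs with h1 h2 <;> push_cast <;> constructor <;> linarith

lemma sdrRem_sum (x : ℝ) : ∀ n,
    ∑ i ∈ Finset.range n, (sdrDigit (sdrRem x i) : ℝ) / 2 ^ (i + 1)
      = x - sdrRem x n / 2 ^ n := by
  intro n
  induction n with
  | zero => simp [sdrRem]
  | succ n ih =>
    rw [Finset.sum_range_succ, ih]
    have : sdrRem x (n+1) = 2 * sdrRem x n - (sdrDigit (sdrRem x n) : ℝ) := rfl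
    rw [this]
    have h2 : (2:ℝ) ^ n ≠ 0 := by positivity
    field_simp
    ring

theorem hasSDR_of_abs_le_one (x : ℝ) (hx : |x| ≤ 1) : HasSDR x := by
  refine ⟨fun i => sdrDigit (sdrRem x i), fun i => sdrDigit_mem _, ?_⟩
  set f : ℕ → ℝ := fun i => (sdrDigit (sdrRem x i) : ℝ) / 2 ^ (i + 1) with hf
  have hbound : ∀ i, ‖f i‖ ≤ (1/2) ^ i := by
    intro i
    have hd : |(sdrDigit (sdrRem x i) : ℝ)| ≤ 1 := by
      rcases sdrDigit_mem (sdrRem x i) with h | h | h <;> rw [h] <;> norm_num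
    have : ‖f i‖ = |(sdrDigit (sdrRem x i) : ℝ)| / 2 ^ (i+1) := by
      simp [hf, abs_div, abs_of_pos (by positivity : (0:ℝ) < 2 ^ (i+1))]
    rw [this]
    rw [div_le_iff₀ (by positivity)]
    calc |(sdrDigit (sdrRem x i) : ℝ)| ≤ 1 := hd
      _ ≤ (1/2)^i * 2^(i+1) := by
          have : ((1:ℝ)/2)^i * 2^(i+1) = 2 := by
            rw [div_pow, one_pow, pow_succ]; field_simp
          rw [this]; norm_num
  have hsum : Summable f := by
    apply Summable.of_norm
    exact Summable.of_nonneg_of_le (fun i => norm_nonneg _) hbound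
      (summable_geometric_of_lt_one (by norm_num) (by norm_num))
  have htend : Filter.Tendsto (fun n => ∑ i ∈ Finset.range n, f i)
      Filter.atTop (nhds x) := by
    have heq : (fun n => ∑ i ∈ Finset.range n, f i)
        = fun n => x - sdrRem x n / 2 ^ n := by
      funext n; exact sdrRem_sum x n
    rw [heq]
    have h0 : Filter.Tendsto (fun n => sdrRem x n / 2 ^ n) Filter.atTop (nhds 0) := by
      apply squeeze_zero_norm (a := fun n => (1/2:ℝ)^n)
      · intro n
        have := sdrRem_abs_le x hx n
        rw [Real.norm_eq_abs, abs_div, abs_of_pos (by positivity : (0:ℝ) < 2^n)]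
        rw [div_le_iff₀ (by positivity), div_pow, one_pow, one_div, inv_mul_cancel₀ (by positivity)]
        exact this
      · exact tendsto_pow_atTop_nhds_zero_of_lt_one (by norm_num) (by norm_num)
    have := Filter.Tendsto.const_sub x h0
    simpa using this
  have := (hsum.hasSum_iff_tendsto_nat).mpr htend
  exact this.tsum_eq.symm
end

section
/- Let x be a real number that has a signed digit representation and suppose x ≤ 0. Then x + 1 has a signed digit representation. -/
open Finset Filter Topology

lemma hasSum_half_pow : HasSum (fun i : ℕ => (1:ℝ) / 2 ^ (i+1)) 1 := by
  have h := hasSum_geometric_two' 1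
  convert h using 2 with n
  rw [pow_succ]
  ring

lemma sdr_summable (d : ℕ → ℤ) (hd : ∀ i, d i = -1 ∨ d i = 0 ∨ d i = 1) :
    Summable (fun i : ℕ => ‖(d i : ℝ) / 2 ^ (i+1)‖) := by
  refine Summable.of_nonneg_of_le (fun i => norm_nonneg _) (fun i => ?_)
    hasSum_half_pow.summable
  · rw [norm_div, norm_pow]
    simp only [Real.norm_ofNat, Real.norm_eq_abs]
    gcongr
    rcases hd i with h | h | h <;> simp [h]

lemma digit_bound (t : ℝ) : 0 ≤ ⌊2*t⌋ - 2*⌊t⌋ ∧ ⌊2*t⌋ - 2*⌊t⌋ ≤ 1 := by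
  have h1 : (2:ℤ)*⌊t⌋ ≤ ⌊2*t⌋ := by
    rw [Int.le_floor]
    push_cast
    nlinarith [Int.floor_le t]
  have h2 : ⌊2*t⌋ < 2*⌊t⌋ + 2 := by
    rw [Int.floor_lt]
    push_cast
    nlinarith [Int.lt_floor_add_one t]
  omega

lemma sdr_of_Icc (y : ℝ) (h0 : 0 ≤ y) (h1 : y ≤ 1) : HasSDR y := by
  rcases eq_or_lt_of_le h1 with rfl | h1
  · refine ⟨fun _ => 1, fun i => Or.inr (Or.inr rfl), ?_⟩
    symm
    push_cast
    exact hasSum_half_pow.tsum_eq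
  · -- binary expansion
    set d : ℕ → ℤ := fun i => ⌊y * 2^(i+1)⌋ - 2*⌊y * 2^i⌋ with hdset
    have hd : ∀ i, d i = -1 ∨ d i = 0 ∨ d i = 1 := by
      intro i
      have := digit_bound (y * 2^i)
      have he : 2 * (y * 2^i) = y * 2^(i+1) := by rw [pow_succ]; ring
      rw [he] at this
      simp only [hdset]
      omega
    have hfloor0 : ⌊y⌋ = 0 := Int.floor_eq_zero_iff.2 ⟨h0, h1⟩
    set g : ℕ → ℝ := fun n => (⌊y * 2^n⌋ : ℝ) / 2^n with hgset
    have hterm : ∀ i, (d i : ℝ) / 2^(i+1) = g (i+1) - g i := by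
      intro i
      simp only [hdset, hgset]
      push_cast
      rw [pow_succ]
      have : (2:ℝ)^i ≠ 0 := by positivity
      field_simp
    have hpartial : ∀ n, ∑ i ∈ range n, (d i : ℝ) / 2^(i+1) = g n := by
      intro n
      rw [Finset.sum_congr rfl (fun i _ => hterm i), Finset.sum_range_sub]
      simp [hgset, hfloor0]
    have hg_le : ∀ n, g n ≤ y := by
      intro n
      rw [hgset, div_le_iff₀ (by positivity : (0:ℝ) < 2^n)]
      exact Int.floor_le _
    have hg_ge : ∀ n, y - (1/2:ℝ)^n ≤ g n := by
      intro n
      rw [hgset, le_div_iff₀ (by positivity : (0:ℝ) < 2^n)]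
      have := Int.lt_floor_add_one (y * 2^n)
      have h2 : ((1:ℝ)/2)^n * 2^n = 1 := by
        rw [div_pow, one_pow, div_mul_cancel₀]
        positivity
      nlinarith
    have htend : Tendsto g atTop (𝓝 y) := by
      have hlow : Tendsto (fun n : ℕ => y - (1/2:ℝ)^n) atTop (𝓝 y) := by
        have : Tendsto (fun n : ℕ => (1/2:ℝ)^n) atTop (𝓝 0) := by
          apply tendsto_pow_atTop_nhds_zero_of_lt_one <;> norm_num
        simpa using tendsto_const_nhds.sub this
      exact tendsto_of_tendsto_of_tendsto_of_le_of_le hlow tendsto_const_nhds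
        hg_ge hg_le
    have hsum : HasSum (fun i : ℕ => (d i : ℝ) / 2^(i+1)) y := by
      rw [hasSum_iff_tendsto_nat_of_summable_norm (sdr_summable d hd)]
      simpa only [hpartial] using htend
    exact ⟨d, hd, hsum.tsum_eq.symm⟩

theorem sdr_neg_plus_one (x : ℝ) (hx : HasSDR x) (hneg : x ≤ 0) :
    HasSDR (x + 1) := by
  obtain ⟨d, hd, hxeq⟩ := hx
  have hsummable : Summable (fun i : ℕ => (d i : ℝ) / 2^(i+1)) :=
    (sdr_summable d hd).of_norm
  have hsum : HasSum (fun i : ℕ => (d i : ℝ) / 2^(i+1)) x :=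
    hxeq ▸ hsummable.hasSum
  have hge : -1 ≤ x := by
    have hneg1 : HasSum (fun i : ℕ => -((1:ℝ) / 2^(i+1))) (-1) := hasSum_half_pow.neg
    refine hasSum_le (fun i => ?_) hneg1 hsum
    have : (-1:ℝ) ≤ (d i : ℝ) := by
      rcases hd i with h | h | h <;> simp [h]
    rw [neg_div']
    gcongr
  exact sdr_of_Icc (x+1) (by linarith) (by linarith)
end

section
/- Let x be a real number that has a signed digit representation. Then both x/2 + 1/4 and x/2 - 1/4 have signed digit representations. -/
/-!
Writing `x = d₀/2 + y/2` with `y` the value of the tail digits, we get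
`x/2 + 1/4 = 0/2 + ((d₀ + 1)/2 + y/2)/2`, which is a representation with leading digits
`0, d₀ + 1` unless `d₀ = 1`; in that case `x/2 + 1/4 = 1/2 + (0/2 + y/2)/2` instead.
The case `x/2 - 1/4` follows by negating all digits.
-/

namespace HasSDR

lemma summable_digit_series {d : ℕ → ℤ} (hd : ∀ i, d i = -1 ∨ d i = 0 ∨ d i = 1) :
    Summable fun i : ℕ => (d i : ℝ) / 2 ^ (i + 1) := by
  refine summable_geometric_two.of_norm_bounded fun i => ?_
  have hdi : |(d i : ℝ)| ≤ 1 := by rcases hd i with h | h | h <;> simp [h]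
  rw [Real.norm_eq_abs, abs_div, abs_of_pos (by positivity : (0 : ℝ) < 2 ^ (i + 1)),
    div_pow, one_pow, pow_succ]
  calc |(d i : ℝ)| / (2 ^ i * 2) ≤ 1 / (2 ^ i * 2) := by gcongr
    _ ≤ 1 / 2 ^ i := by gcongr; linarith [pow_pos (two_pos : (0 : ℝ) < 2) i]

lemma tsum_digit_series_eq_head_add_tail {d : ℕ → ℤ}
    (hd : ∀ i, d i = -1 ∨ d i = 0 ∨ d i = 1) :
    ∑' i : ℕ, (d i : ℝ) / 2 ^ (i + 1)
      = d 0 / 2 + (∑' i : ℕ, (d (i + 1) : ℝ) / 2 ^ (i + 1)) / 2 := by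
  rw [(summable_digit_series hd).tsum_eq_zero_add, ← tsum_div_const]
  congr 1
  · norm_num
  · congr 1
    funext i
    rw [pow_succ _ (i + 1)]
    ring

lemma cons {a : ℤ} {y : ℝ} (ha : a = -1 ∨ a = 0 ∨ a = 1) (hy : HasSDR y) :
    HasSDR (a / 2 + y / 2) := by
  obtain ⟨d, hd, rfl⟩ := hy
  let e : ℕ → ℤ := fun | 0 => a | i + 1 => d i
  have he : ∀ i, e i = -1 ∨ e i = 0 ∨ e i = 1 := by
    rintro (_ | i)
    exacts [ha, hd i]
  exact ⟨e, he, (tsum_digit_series_eq_head_add_tail he).symm⟩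

lemma exists_eq_cons {x : ℝ} (hx : HasSDR x) :
    ∃ a : ℤ, (a = -1 ∨ a = 0 ∨ a = 1) ∧ ∃ y, HasSDR y ∧ x = a / 2 + y / 2 := by
  obtain ⟨d, hd, rfl⟩ := hx
  exact ⟨d 0, hd 0, _, ⟨_, fun i => hd (i + 1), rfl⟩,
    tsum_digit_series_eq_head_add_tail hd⟩

lemma neg {x : ℝ} (hx : HasSDR x) : HasSDR (-x) := by
  obtain ⟨d, hd, rfl⟩ := hx
  refine ⟨-d, fun i => ?_, ?_⟩
  · rcases hd i with h | h | h <;> simp [h]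
  · rw [← tsum_neg]
    simp [neg_div]

lemma half_add_quarter {x : ℝ} (hx : HasSDR x) : HasSDR (x / 2 + 1 / 4) := by
  obtain ⟨a, ha, y, hy, rfl⟩ := hx.exists_eq_cons
  have hquarter : ∀ b c : ℤ, (b = -1 ∨ b = 0 ∨ b = 1) → (c = -1 ∨ c = 0 ∨ c = 1) →
      (b : ℝ) / 2 + c / 4 = a / 4 + 1 / 4 → HasSDR ((a / 2 + y / 2) / 2 + 1 / 4) := by
    intro b c hb hc hbc
    convert cons hb (cons hc hy) using 1
    linarith
  rcases ha with rfl | rfl | rfl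
  · exact hquarter 0 0 (by simp) (by simp) (by norm_num)
  · exact hquarter 0 1 (by simp) (by simp) (by norm_num)
  · exact hquarter 1 0 (by simp) (by simp) (by norm_num)

end HasSDR

theorem sdr_half_pm_quarter (x : ℝ) (hx : HasSDR x) :
    HasSDR (x / 2 + 1 / 4) ∧ HasSDR (x / 2 - 1 / 4) := by
  refine ⟨hx.half_add_quarter, ?_⟩
  have h := hx.neg.half_add_quarter.neg
  rwa [show -(-x / 2 + 1 / 4) = x / 2 - 1 / 4 by ring] at h
end

section
/- Let x ∈ [1/4, 1] be a real number and define the Heron sequence H : ℕ → ℝ by H 0 = 1 and H (n+1) = (H n + x / H n)/2. Then for every natural number n, one has 0 ≤ H n - √x ≤ 2^{-2^n}. -/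
/-! The error `eₙ = Hₙ - √x` of Heron's method satisfies `eₙ₊₁ = eₙ² / (2 Hₙ)`. All iterates lie
above `√x ≥ 1/2`, so `eₙ₊₁ ≤ eₙ²`, and squaring the initial error `e₀ = 1 - √x ≤ 1/2` at each step
gives `eₙ ≤ (1/2)^(2^n)`. -/

open Real

noncomputable def heronStep (x a : ℝ) : ℝ := (a + x / a) / 2

theorem heronStep_sub_sqrt {x a : ℝ} (hx : 0 ≤ x) (ha : a ≠ 0) :
    heronStep x a - √x = (a - √x) ^ 2 / (2 * a) := by
  have hsq : √x ^ 2 = x := sq_sqrt hx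
  rw [heronStep]
  field_simp
  linear_combination (-1 : ℝ) * hsq

theorem sqrt_le_heronStep {x a : ℝ} (hx : 0 ≤ x) (ha : 0 < a) : √x ≤ heronStep x a := by
  have h := heronStep_sub_sqrt hx ha.ne'
  have : 0 ≤ (a - √x) ^ 2 / (2 * a) := by positivity
  linarith

theorem heronStep_sub_sqrt_le_sq {x a : ℝ} (hx : 0 ≤ x) (ha : 1 / 2 ≤ a) :
    heronStep x a - √x ≤ (a - √x) ^ 2 := by
  rw [heronStep_sub_sqrt hx (by positivity)]
  exact div_le_self (sq_nonneg _) (by linarith)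

theorem le_pow_two_pow_of_le_sq {e : ℕ → ℝ} (he : ∀ n, 0 ≤ e n) (hsq : ∀ n, e (n + 1) ≤ e n ^ 2)
    (n : ℕ) : e n ≤ e 0 ^ 2 ^ n := by
  induction n with
  | zero => simp
  | succ n ih =>
    calc e (n + 1) ≤ e n ^ 2 := hsq n
      _ ≤ (e 0 ^ 2 ^ n) ^ 2 := pow_le_pow_left₀ (he n) ih 2
      _ = e 0 ^ 2 ^ (n + 1) := by rw [← pow_mul, pow_succ]

theorem heron_fast_conv (x : ℝ) (hx : x ∈ Set.Icc (1 / 4 : ℝ) 1) (H : ℕ → ℝ)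
    (hH0 : H 0 = 1) (hHs : ∀ n, H (n + 1) = (H n + x / H n) / 2) :
    ∀ n : ℕ, 0 ≤ H n - Real.sqrt x ∧ H n - Real.sqrt x ≤ 1 / 2 ^ (2 ^ n) := by
  obtain ⟨hx_lo, hx_hi⟩ := hx
  have hx0 : 0 ≤ x := by linarith
  have hs_lo : 1 / 2 ≤ √x := by
    rw [show (1 / 2 : ℝ) = √(1 / 4) by rw [eq_comm, sqrt_eq_iff_mul_self_eq] <;> norm_num]
    exact sqrt_le_sqrt hx_lo
  have hs_hi : √x ≤ 1 := sqrt_le_one.mpr hx_hi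
  have h_above : ∀ n, √x ≤ H n := by
    intro n
    induction n with
    | zero => rwa [hH0]
    | succ n ih => rw [hHs]; exact sqrt_le_heronStep hx0 (by linarith)
  have h_err : ∀ n, H n - √x ≤ (H 0 - √x) ^ 2 ^ n :=
    le_pow_two_pow_of_le_sq (fun n => sub_nonneg.mpr (h_above n))
      (fun n => by rw [hHs]; exact heronStep_sub_sqrt_le_sq hx0 (by linarith [h_above n]))
  intro n
  refine ⟨sub_nonneg.mpr (h_above n), (h_err n).trans ?_⟩
  rw [hH0, one_div, ← inv_pow]
  exact pow_le_pow_left₀ (by linarith) (by linarith) _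
end

section
/- Let x be a real number that has a signed digit representation and suppose 1/16 ≤ x. Define the Heron sequence H : ℕ → ℝ by H 0 = 1 and H (n+1) = (H n + x / H n)/2. Then for every natural number n, the real number H n has a signed digit representation. -/
/-! Every real in `[0, 1]` has a binary expansion, which is in particular a signed digit
representation, and conversely a signed digit representation has absolute value at most
`∑ 2⁻⁽ⁱ⁺¹⁾ = 1`; so `HasSDR x ↔ x ∈ [-1, 1]`. For `0 < x ≤ 1` one Heron step maps
`[√x, 1]` into itself (AM-GM for the lower bound, `x ≤ √x ≤ h` for the upper one), so the
Heron sequence started at `1` stays in `[√x, 1] ⊆ [-1, 1]`. -/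

open Set

theorem HasSDR.neg_s15 {x : ℝ} (hx : HasSDR x) : HasSDR (-x) := by
  obtain ⟨d, hd, rfl⟩ := hx
  refine ⟨fun i => -d i, fun i => by rcases hd i with h | h | h <;> simp [h], ?_⟩
  simp only [Int.cast_neg, neg_div, tsum_neg]

theorem HasSDR.abs_le_one {x : ℝ} (hx : HasSDR x) : |x| ≤ 1 := by
  obtain ⟨d, hd, rfl⟩ := hx
  have hgeom : HasSum (fun i : ℕ => (1 : ℝ) / 2 ^ (i + 1)) 1 := by
    simpa only [pow_succ', ← div_div] using hasSum_geometric_two' 1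
  rw [← Real.norm_eq_abs]
  refine tsum_of_norm_bounded hgeom fun i => ?_
  rw [Real.norm_eq_abs, abs_div, abs_pow, abs_two]
  gcongr
  rcases hd i with h | h | h <;> simp [h]

theorem hasSDR_of_mem_Icc_zero_one {y : ℝ} (hy : y ∈ Icc 0 1) : HasSDR y := by
  obtain ⟨d, -, rfl⟩ := Real.ofDigits_SurjOn (b := 2) one_lt_two hy
  refine ⟨fun i => d i, fun i => by have := (d i).isLt; dsimp only; omega, ?_⟩
  simp [Real.ofDigits, Real.ofDigitsTerm, div_eq_mul_inv]

theorem hasSDR_iff_mem_Icc {x : ℝ} : HasSDR x ↔ x ∈ Icc (-1) 1 := by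
  refine ⟨fun hx => abs_le.mp hx.abs_le_one, fun hx => ?_⟩
  rcases le_total 0 x with h | h
  · exact hasSDR_of_mem_Icc_zero_one ⟨h, hx.2⟩
  · simpa using (hasSDR_of_mem_Icc_zero_one ⟨neg_nonneg.mpr h, by linarith [hx.1]⟩).neg_s15

theorem heron_step_mem_Icc {x h : ℝ} (hx0 : 0 < x) (hx1 : x ≤ 1) (hh : h ∈ Icc (√x) 1) :
    (h + x / h) / 2 ∈ Icc (√x) 1 := by
  have hsqrt : √x ^ 2 = x := Real.sq_sqrt hx0.le
  have hpos : 0 < h := (Real.sqrt_pos.mpr hx0).trans_le hh.1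
  have hxh : x / h * h = x := div_mul_cancel₀ x hpos.ne'
  constructor
  · nlinarith [sq_nonneg (h - √x)]
  · have hx_le_h : x ≤ h := by nlinarith [hh.1, Real.sqrt_nonneg x]
    have : x / h ≤ 1 := (div_le_one hpos).mpr hx_le_h
    linarith [hh.2]

theorem heron_sdr (x : ℝ) (hx : HasSDR x) (hlb : 1 / 16 ≤ x) (H : ℕ → ℝ)
    (hH0 : H 0 = 1) (hHs : ∀ n, H (n + 1) = (H n + x / H n) / 2) :
    ∀ n : ℕ, HasSDR (H n) := by
  have hx1 : x ≤ 1 := (hasSDR_iff_mem_Icc.mp hx).2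
  have hx0 : 0 < x := by linarith
  have hmem : ∀ n, H n ∈ Icc (√x) 1 := by
    intro n
    induction n with
    | zero => rw [hH0]; exact ⟨Real.sqrt_le_one.mpr hx1, le_rfl⟩
    | succ n ih => rw [hHs n]; exact heron_step_mem_Icc hx0 hx1 ih
  intro n
  exact hasSDR_iff_mem_Icc.mpr ⟨by linarith [Real.sqrt_nonneg x, (hmem n).1], (hmem n).2⟩
end
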